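/- Let c = √(√5+2) and r = √(√5+1). The spherical inversion of ℝ³ given by q ↦ r²·(q - (c,0,0))/‖q - (c,0,0)‖² + (c,0,0) maps the open unit ball of ℝ³ onto itself. -/

import Mathlib

/-!
The inversion sphere `‖q - c‖ = r` meets the unit sphere orthogonally, because `‖c‖² = 1 + r²`.
For such a pair of spheres, `‖inversion c r x‖² - 1` is a positive multiple of `‖x‖² - 1`, so the
inversion maps the open unit ball into itself; being an involution, it maps the ball onto itself.
-/

open EuclideanGeometry Metric

section OrthogonalInversion

variable {E : Type*} [NormedAddCommGroup E] [InnerProductSpace ℝ E] {c : E} {R ρ : ℝ}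

lemma norm_inversion_sq_sub_sq (hc : ‖c‖ ^ 2 = ρ ^ 2 + R ^ 2) {x : E} (hx : x ≠ c) :
    ‖inversion c R x‖ ^ 2 - ρ ^ 2 = (R / ‖x - c‖) ^ 2 * (‖x‖ ^ 2 - ρ ^ 2) := by
  have hk : (R / ‖x - c‖) ^ 2 * ‖x - c‖ ^ 2 = R ^ 2 := by
    rw [div_pow, div_mul_cancel₀ _ (pow_ne_zero 2 (norm_ne_zero_iff.mpr (sub_ne_zero.mpr hx)))]
  set k := (R / ‖x - c‖) ^ 2
  have hinv :
      ‖inversion c R x‖ ^ 2 = k ^ 2 * ‖x - c‖ ^ 2 + 2 * k * inner ℝ (x - c) c + ‖c‖ ^ 2 := by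
    rw [inversion, vadd_eq_add, vsub_eq_sub, dist_eq_norm, norm_add_sq_real, norm_smul,
      real_inner_smul_left, Real.norm_eq_abs, mul_pow, sq_abs]
    ring
  have hnorm : ‖x‖ ^ 2 = ‖x - c‖ ^ 2 + 2 * inner ℝ (x - c) c + ‖c‖ ^ 2 := by
    simpa using norm_add_sq_real (x - c) c
  linear_combination hinv - k * hnorm + (k - 1) * hk + (1 - k) * hc

lemma mapsTo_inversion_ball (hc : ‖c‖ ^ 2 = ρ ^ 2 + R ^ 2) (hR : R ≠ 0) :
    Set.MapsTo (inversion c R) (ball 0 ρ) (ball 0 ρ) := by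
  intro x hx
  rw [mem_ball_zero_iff] at hx ⊢
  have hxρ : ‖x‖ ^ 2 < ρ ^ 2 := pow_lt_pow_left₀ hx (norm_nonneg x) two_ne_zero
  have hxc : x ≠ c := by
    rintro rfl
    nlinarith [pow_two_pos_of_ne_zero hR]
  have hk : 0 < (R / ‖x - c‖) ^ 2 :=
    pow_two_pos_of_ne_zero (div_ne_zero hR (norm_ne_zero_iff.mpr (sub_ne_zero.mpr hxc)))
  have hsq : ‖inversion c R x‖ ^ 2 < ρ ^ 2 := by
    nlinarith [norm_inversion_sq_sub_sq hc hxc]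
  exact lt_of_pow_lt_pow_left₀ 2 (norm_nonneg x |>.trans hx.le) hsq

theorem inversion_image_ball (hc : ‖c‖ ^ 2 = ρ ^ 2 + R ^ 2) (hR : R ≠ 0) :
    inversion c R '' ball 0 ρ = ball 0 ρ :=
  have hmaps := mapsTo_inversion_ball hc hR
  (Set.LeftInvOn.surjOn (fun x _ ↦ inversion_inversion c hR x) hmaps).image_eq_of_mapsTo hmaps

end OrthogonalInversion

/-- With c = √(√5+2) and r = √(√5+1), the spherical inversion
q ↦ r²(q-(c,0,0))/‖q-(c,0,0)‖² + (c,0,0) maps the open unit ball of ℝ³ onto itself. -/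
theorem inversion_maps_ball :
    (fun q : EuclideanSpace ℝ (Fin 3) =>
        ((Real.sqrt (Real.sqrt 5 + 1))^2 /
            ‖q - (WithLp.equiv 2 (Fin 3 → ℝ)).symm ![Real.sqrt (Real.sqrt 5 + 2), 0, 0]‖^2) •
          (q - (WithLp.equiv 2 (Fin 3 → ℝ)).symm ![Real.sqrt (Real.sqrt 5 + 2), 0, 0]) +
        (WithLp.equiv 2 (Fin 3 → ℝ)).symm ![Real.sqrt (Real.sqrt 5 + 2), 0, 0]) ''
      Metric.ball 0 1 = Metric.ball 0 1 := by
  set R := Real.sqrt (Real.sqrt 5 + 1)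
  set c : EuclideanSpace ℝ (Fin 3) :=
    (WithLp.equiv 2 (Fin 3 → ℝ)).symm ![Real.sqrt (Real.sqrt 5 + 2), 0, 0]
  have h5 : 0 ≤ Real.sqrt 5 := Real.sqrt_nonneg 5
  have hR : R ≠ 0 := (Real.sqrt_pos.mpr (by linarith)).ne'
  have hc : ‖c‖ ^ 2 = 1 ^ 2 + R ^ 2 := by
    rw [EuclideanSpace.norm_sq_eq, Real.sq_sqrt (by linarith)]
    simp [c, Fin.sum_univ_three, Real.sq_sqrt (show (0 : ℝ) ≤ Real.sqrt 5 + 2 by linarith)]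
    ring
  have hmap : (fun q ↦ (R ^ 2 / ‖q - c‖ ^ 2) • (q - c) + c) = inversion c R := by
    funext q
    rw [inversion, vadd_eq_add, vsub_eq_sub, dist_eq_norm, div_pow]
  rw [hmap]
  exact inversion_image_ball hc hR
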